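/- For every unbounded metric space (X,d) with marked point p ∈ X there exists a scaling sequence r̃ and a pretangent space Ω_{∞,r̃}^X consisting of at least two points. -/

import Mathlib

open Filter Topology

/-- A scaling sequence: a sequence of positive reals tending to infinity. -/
def ScalingSeq (r : ℕ → ℝ) : Prop :=
  (∀ n, 0 < r n) ∧ Tendsto r atTop atTop

/-- `x ∈ X̃_{∞,r̃}`: the sequence `x` satisfies `d(x_n,p) → ∞` and the finite limit
`d̃_r̃(x̃) = lim d(x_n,p)/r_n` exists.  Here `d` is the distance function of the space. -/
def SeqAdm {Y : Type*} (d : Y → Y → ℝ) (p : Y) (r : ℕ → ℝ) (x : ℕ → Y) : Prop :=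
  Tendsto (fun n => d (x n) p) atTop atTop ∧
  ∃ L : ℝ, Tendsto (fun n => d (x n) p / r n) atTop (𝓝 L)

/-- The equivalence `x̃ ≡ ỹ ⇔ lim d(x_n,y_n)/r_n = 0`. -/
def SeqEquiv {Y : Type*} (d : Y → Y → ℝ) (r : ℕ → ℝ) (x y : ℕ → Y) : Prop :=
  Tendsto (fun n => d (x n) (y n) / r n) atTop (𝓝 0)

/-- Mutual stability: the limit `lim d(x_n,y_n)/r_n` exists (and is finite). -/
def MutStable {Y : Type*} (d : Y → Y → ℝ) (r : ℕ → ℝ) (x y : ℕ → Y) : Prop :=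
  ∃ L : ℝ, Tendsto (fun n => d (x n) (y n) / r n) atTop (𝓝 L)

/-- A set of sequences representing a clique in the graph `G_{X,r̃}`: all members are
admissible, the set is a union of equivalence classes, and all members are pairwise
mutually stable. -/
def IsCliqueSet {Y : Type*} (d : Y → Y → ℝ) (p : Y) (r : ℕ → ℝ) (C : Set (ℕ → Y)) : Prop :=
  (∀ x ∈ C, SeqAdm d p r x) ∧
  (∀ x ∈ C, ∀ y, SeqAdm d p r y → SeqEquiv d r x y → y ∈ C) ∧
  (∀ x ∈ C, ∀ y ∈ C, MutStable d r x y)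

/-- A pretangent space `Ω^X_{∞,r̃}`, encoded as the (union of the) maximal clique of the
graph `G_{X,r̃}`. -/
def IsPretangent {Y : Type*} (d : Y → Y → ℝ) (p : Y) (r : ℕ → ℝ) (C : Set (ℕ → Y)) : Prop :=
  IsCliqueSet d p r C ∧ ∀ D, IsCliqueSet d p r D → C ⊆ D → D = C

/-- The point `α₀ = α₀(X,r̃)`: the class of admissible sequences with `d̃_r̃(x̃) = 0`. -/
def alphaZero {Y : Type*} (d : Y → Y → ℝ) (p : Y) (r : ℕ → ℝ) : Set (ℕ → Y) :=
  {x | SeqAdm d p r x ∧ Tendsto (fun n => d (x n) p / r n) atTop (𝓝 0)}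

/-- The metric `ρ` of a pretangent space: `ρ(α,β) = lim d(x_n,y_n)/r_n`. -/
noncomputable def seqDist {Y : Type*} (d : Y → Y → ℝ) (r : ℕ → ℝ) (x y : ℕ → Y) : ℝ :=
  limUnder atTop (fun n => d (x n) (y n) / r n)

/-
Choose points `y n` with `d(y_n, p) > n` and points `x n` with `d(x_n, p) > (n + 1) d(y_n, p)`, and
scale by `r_n = d(x_n, p)`. Then `x̃` sits at distance `1` from `p` in the limit while `ỹ`, though
still escaping to infinity, collapses to `α₀`, so `ρ(x̃, ỹ) = 1`. The classes of `x̃` and `ỹ` form a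
clique of `G_{X,r̃}`, and Zorn's lemma extends it to a maximal one.
-/

section Equivalence

variable {Y : Type*} [PseudoMetricSpace Y] {r : ℕ → ℝ}

theorem SeqEquiv.refl (r : ℕ → ℝ) (x : ℕ → Y) : SeqEquiv dist r x x := by
  simp [SeqEquiv]

theorem SeqEquiv.symm {x y : ℕ → Y} (h : SeqEquiv dist r x y) : SeqEquiv dist r y x := by
  simpa only [SeqEquiv, dist_comm] using h

theorem SeqEquiv.tendsto_dist_div {x y z w : ℕ → Y} {L : ℝ}
    (hz : SeqEquiv dist r z x) (hw : SeqEquiv dist r w y)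
    (hL : Tendsto (fun n => dist (x n) (y n) / r n) atTop (𝓝 L)) :
    Tendsto (fun n => dist (z n) (w n) / r n) atTop (𝓝 L) := by
  have hbound : ∀ n, ‖dist (z n) (w n) / r n - dist (x n) (y n) / r n‖ ≤
      ‖dist (z n) (x n) / r n + dist (w n) (y n) / r n‖ := fun n => by
    rw [← sub_div, ← add_div, norm_div, norm_div]
    gcongr
    rw [← dist_eq_norm]
    exact (dist_dist_dist_le _ _ _ _).trans (Real.le_norm_self _)
  have hsmall := squeeze_zero_norm hbound (by simpa using (hz.add hw).norm)
  simpa using hsmall.add hL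

theorem SeqEquiv.trans {x y z : ℕ → Y} (hxy : SeqEquiv dist r x y) (hyz : SeqEquiv dist r y z) :
    SeqEquiv dist r x z :=
  hxy.tendsto_dist_div (SeqEquiv.refl r z) hyz

end Equivalence

section Cliques

variable {Y : Type*} {d : Y → Y → ℝ} {p : Y} {r : ℕ → ℝ}

theorem isCliqueSet_sUnion {c : Set (Set (ℕ → Y))} (hc : ∀ C ∈ c, IsCliqueSet d p r C)
    (hchain : IsChain (· ⊆ ·) c) : IsCliqueSet d p r (⋃₀ c) := by
  refine ⟨?_, ?_, ?_⟩
  · rintro x ⟨C, hC, hx⟩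
    exact (hc C hC).1 x hx
  · rintro x ⟨C, hC, hx⟩ y hy hxy
    exact ⟨C, hC, (hc C hC).2.1 x hx y hy hxy⟩
  · rintro x ⟨C, hC, hx⟩ y ⟨D, hD, hy⟩
    rcases hchain.total hC hD with hCD | hDC
    · exact (hc D hD).2.2 x (hCD hx) y hy
    · exact (hc C hC).2.2 x hx y (hDC hy)

theorem IsCliqueSet.exists_isPretangent_superset {C : Set (ℕ → Y)} (hC : IsCliqueSet d p r C) :
    ∃ M, C ⊆ M ∧ IsPretangent d p r M := by
  obtain ⟨M, hCM, hM⟩ := zorn_subset_nonempty {D | IsCliqueSet d p r D ∧ C ⊆ D}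
    (fun c hc hchain ⟨D, hD⟩ => ⟨⋃₀ c, ⟨isCliqueSet_sUnion (fun E hE => (hc hE).1) hchain,
      (hc hD).2.trans (Set.subset_sUnion_of_mem hD)⟩, fun _ => Set.subset_sUnion_of_mem⟩)
    C ⟨hC, subset_rfl⟩
  exact ⟨M, hCM, hM.prop.1, fun D hD hMD => (hM.eq_of_subset ⟨hD, hCM.trans hMD⟩ hMD).symm⟩

def saturate (d : Y → Y → ℝ) (p : Y) (r : ℕ → ℝ) (S : Set (ℕ → Y)) : Set (ℕ → Y) :=
  {z | SeqAdm d p r z ∧ ∃ s ∈ S, SeqEquiv d r z s}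

end Cliques

section Saturation

variable {Y : Type*} [PseudoMetricSpace Y] {p : Y} {r : ℕ → ℝ} {S : Set (ℕ → Y)}

theorem subset_saturate (hS : ∀ s ∈ S, SeqAdm dist p r s) : S ⊆ saturate dist p r S :=
  fun s hs => ⟨hS s hs, s, hs, SeqEquiv.refl r s⟩

theorem isCliqueSet_saturate (hS : ∀ s ∈ S, ∀ t ∈ S, MutStable dist r s t) :
    IsCliqueSet dist p r (saturate dist p r S) := by
  refine ⟨fun z hz => hz.1, ?_, ?_⟩
  · rintro z ⟨-, s, hs, hzs⟩ w hw hzw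
    exact ⟨hw, s, hs, hzw.symm.trans hzs⟩
  · rintro z ⟨-, s, hs, hzs⟩ w ⟨-, t, ht, hwt⟩
    obtain ⟨L, hL⟩ := hS s hs t ht
    exact ⟨L, hzs.tendsto_dist_div hwt hL⟩

end Saturation

theorem scalingSeq_of_natCast_lt {r : ℕ → ℝ} (h : ∀ n : ℕ, (n : ℝ) < r n) : ScalingSeq r :=
  ⟨fun n => (Nat.cast_nonneg n).trans_lt (h n),
    tendsto_atTop_mono (fun n => (h n).le) tendsto_natCast_atTop_atTop⟩

theorem exists_lt_dist_of_not_isBounded_univ {X : Type*} [PseudoMetricSpace X]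
    (hX : ¬ Bornology.IsBounded (Set.univ : Set X)) (p : X) (R : ℝ) : ∃ x, R < dist x p := by
  by_contra! h
  exact hX ((Metric.isBounded_iff_subset_closedBall p).2 ⟨R, fun x _ => h x⟩)

theorem natCast_lt_dist_of_far {X : Type*} [PseudoMetricSpace X] {p x y : X} {n : ℕ}
    (hy : (n : ℝ) < dist y p) (hxy : ((n : ℝ) + 1) * dist y p < dist x p) :
    (n : ℝ) < dist x p := by
  nlinarith [(Nat.cast_nonneg n : (0 : ℝ) ≤ n)]

/-- Stated as equivalence with the constant sequence `p` so that `SeqEquiv.tendsto_dist_div` can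
move `d(x_n, p)/r_n → 1` to `d(x_n, y_n)/r_n → 1`. -/
theorem seqEquiv_const_of_far {X : Type*} [PseudoMetricSpace X] {p : X} {x y : ℕ → X}
    (hy : ∀ n : ℕ, (n : ℝ) < dist (y n) p)
    (hxy : ∀ n : ℕ, ((n : ℝ) + 1) * dist (y n) p < dist (x n) p) :
    SeqEquiv dist (fun n => dist (x n) p) y (fun _ => p) := by
  have hbound : ∀ n : ℕ, dist (y n) p / dist (x n) p ≤ 1 / ((n : ℝ) + 1) := fun n => by
    have hx := (Nat.cast_nonneg n).trans_lt (natCast_lt_dist_of_far (hy n) (hxy n))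
    rw [div_le_div_iff₀ hx (by positivity)]
    linarith [hxy n]
  exact squeeze_zero (fun n => by positivity) hbound tendsto_one_div_add_atTop_nhds_zero_nat

/-- For every unbounded metric space `(X,d)` with marked point `p ∈ X`
there exist a scaling sequence `r̃` and a pretangent space `Ω^X_{∞,r̃}` containing at
least two (distinct) points. -/
theorem exists_pretangent_with_two_points {X : Type*} [MetricSpace X]
    (hX : ¬ Bornology.IsBounded (Set.univ : Set X)) (p : X) :
    ∃ r : ℕ → ℝ, ScalingSeq r ∧ ∃ C : Set (ℕ → X), IsPretangent dist p r C ∧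
      ∃ x ∈ C, ∃ y ∈ C, ¬ SeqEquiv dist r x y := by
  choose y hy using fun n : ℕ => exists_lt_dist_of_not_isBounded_univ hX p n
  choose x hxy using fun n : ℕ => exists_lt_dist_of_not_isBounded_univ hX p ((n + 1) * dist (y n) p)
  set r : ℕ → ℝ := fun n => dist (x n) p
  have hx_lt : ∀ n : ℕ, (n : ℝ) < r n := fun n => natCast_lt_dist_of_far (hy n) (hxy n)
  have hr_pos : ∀ n, 0 < r n := (scalingSeq_of_natCast_lt hx_lt).1
  have hx_one : Tendsto (fun n => dist (x n) p / r n) atTop (𝓝 1) :=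
    tendsto_const_nhds.congr fun n => (div_self (hr_pos n).ne').symm
  have hy_zero : SeqEquiv dist r y (fun _ => p) := seqEquiv_const_of_far hy hxy
  have hxy_one : Tendsto (fun n => dist (x n) (y n) / r n) atTop (𝓝 1) :=
    (SeqEquiv.refl r x).tendsto_dist_div hy_zero hx_one
  have hadm : ∀ s ∈ ({x, y} : Set (ℕ → X)), SeqAdm dist p r s := by
    rintro s (rfl | rfl)
    · exact ⟨tendsto_atTop_mono (fun n => (hx_lt n).le) tendsto_natCast_atTop_atTop, 1, hx_one⟩
    · exact ⟨tendsto_atTop_mono (fun n => (hy n).le) tendsto_natCast_atTop_atTop, 0, hy_zero⟩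
  have hstable : ∀ s ∈ ({x, y} : Set (ℕ → X)), ∀ t ∈ ({x, y} : Set (ℕ → X)),
      MutStable dist r s t := by
    rintro s (rfl | rfl) t (rfl | rfl)
    exacts [⟨0, SeqEquiv.refl r _⟩, ⟨1, hxy_one⟩, ⟨1, by simpa only [dist_comm] using hxy_one⟩,
      ⟨0, SeqEquiv.refl r _⟩]
  obtain ⟨M, hsub, hM⟩ := (isCliqueSet_saturate (p := p) hstable).exists_isPretangent_superset
  have hxyM := (subset_saturate hadm).trans hsub
  exact ⟨r, scalingSeq_of_natCast_lt hx_lt, M, hM, x, hxyM (by simp), y, hxyM (by simp),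
    fun h => one_ne_zero (tendsto_nhds_unique hxy_one h)⟩
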